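/- arXiv:2307.05987 — 4 statements merged into one kernel-verified Lean document; each statement's English description precedes it below -/
import Mathlib

section
/- If p^\mu = (\omega, k) \in \mathbb{C}^2 satisfies \omega^2 - k^2 = m^2 (i.e. the Klein-Gordon dispersion relation \omega = \pm\sqrt{m^2+k^2} with m real), then Im \omega \le |Im k|. -/
/-- If `ω² - k² = m²` (Klein–Gordon dispersion relation, `m` real), then `Im ω ≤ |Im k|`. -/
theorem kg_covariant_stability (ω k : ℂ) (m : ℝ)
    (h : ω ^ 2 - k ^ 2 = (m : ℂ) ^ 2) : ω.im ≤ |k.im| := by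
  have hre := congrArg Complex.re h
  have him := congrArg Complex.im h
  simp [Complex.sub_re, Complex.sub_im, pow_two, Complex.mul_re, Complex.mul_im,
    Complex.ofReal_re, Complex.ofReal_im] at hre him
  by_contra hc
  push_neg at hc
  have h1 : k.im < ω.im := (le_abs_self _).trans_lt hc
  have h2 : -k.im < ω.im := lt_of_le_of_lt (neg_le_abs k.im) hc
  nlinarith [sq_nonneg m, sq_nonneg (ω.re - k.re), sq_nonneg (ω.re + k.re),
    sq_nonneg (ω.im - k.im), sq_nonneg (ω.im + k.im), mul_pos (by linarith : (0:ℝ) < ω.im - k.im) (by linarith : (0:ℝ) < ω.im + k.im)]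
end

section
/- The BBM dispersion relation \omega(k) = k/(1+k^2) violates the covariant stability bound: there exist k \in \mathbb{C} with Im \omega(k) > |Im k|. -/
/-- The BBM dispersion relation violates the covariant stability bound. -/
theorem bbm_violates_covariant_stability :
    ∃ k : ℂ, (k / (1 + k ^ 2)).im > |k.im| := by
  use Complex.I / 2
  have h1 : (1 + (Complex.I / 2) ^ 2 : ℂ) = 3 / 4 := by
    rw [div_pow, Complex.I_sq]
    norm_num
  have h : (Complex.I / 2) / (1 + (Complex.I / 2) ^ 2) = (2 / 3 : ℝ) * Complex.I := by
    rw [h1]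
    push_cast
    ring
  rw [h]
  simp
  norm_num
end

section
/- If \Gamma is a closed contour in \mathbb{C} and g(k) is entire, then \oint_\Gamma g(k) dk = 0; in particular, for the BBM construction, \varphi(0,x) = (1/2\pi)\oint_\Gamma e^{ikx} dk = 0 for every real x, while \partial_t\varphi(0,x) = e^{-x}/2 \ne 0. -/
open Complex

private lemma circleIntegral_neg_radius (f : ℂ → ℂ) (c : ℂ) (R : ℝ) :
    (∮ z in C(c, -R), f z) = ∮ z in C(c, R), f z := by
  have hmap : ∀ θ : ℝ, circleMap c (-R) θ = circleMap c R (θ + Real.pi) := by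
    intro θ
    simp only [circleMap, Complex.ofReal_add, add_mul, Complex.exp_add, Complex.exp_pi_mul_I]
    push_cast
    ring
  have hderiv : ∀ θ : ℝ, deriv (circleMap c (-R)) θ = deriv (circleMap c R) (θ + Real.pi) := by
    intro θ
    simp only [deriv_circleMap, circleMap, Complex.ofReal_add, add_mul, Complex.exp_add,
      Complex.exp_pi_mul_I]
    push_cast
    ring
  set g : ℝ → ℂ := fun θ => deriv (circleMap c R) θ • f (circleMap c R θ) with hgdef
  have hper : Function.Periodic g (2 * Real.pi) := by
    intro θ
    simp only [hgdef, deriv_circleMap, periodic_circleMap c R θ, periodic_circleMap 0 R θ]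
  calc (∮ z in C(c, -R), f z)
      = ∫ θ in (0:ℝ)..2 * Real.pi, g (θ + Real.pi) := by
        rw [circleIntegral]
        exact intervalIntegral.integral_congr fun θ _ => by rw [hgdef]; rw [hmap, hderiv]
    _ = ∫ θ in (0 + Real.pi)..(2 * Real.pi + Real.pi), g θ :=
        intervalIntegral.integral_comp_add_right g Real.pi
    _ = ∫ θ in Real.pi..(Real.pi + 2 * Real.pi), g θ := by congr 1 <;> ring
    _ = ∫ θ in (0:ℝ)..(0 + 2 * Real.pi), g θ := hper.intervalIntegral_add_eq Real.pi 0
    _ = ∮ z in C(c, R), f z := by rw [circleIntegral, zero_add]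

private lemma entire_circleIntegral_zero (g : ℂ → ℂ) (hg : Differentiable ℂ g) (c : ℂ) (r : ℝ) :
    (∮ k in C(c, r), g k) = 0 := by
  rcases le_or_gt 0 r with h | h
  · exact circleIntegral_eq_zero_of_differentiable_on_off_countable h Set.countable_empty
      hg.continuous.continuousOn (fun z _ => hg z)
  · rw [← neg_neg r, circleIntegral_neg_radius]
    exact circleIntegral_eq_zero_of_differentiable_on_off_countable (by linarith)
      Set.countable_empty hg.continuous.continuousOn (fun z _ => hg z)

/-- Closed contour integrals of entire functions vanish; in particular the BBM
solution has vanishing initial data `φ(0,x) = 0` while `∂ₜφ(0,x) = e^{-x}/2 ≠ 0`. -/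
theorem bbm_nonzero_solution_with_zero_initial_data :
    (∀ (g : ℂ → ℂ), Differentiable ℂ g → ∀ (c : ℂ) (r : ℝ),
      (∮ k in C(c, r), g k) = 0) ∧
    (∀ x : ℝ, ∀ r : ℝ, 0 < r → r < 2 →
      ((2 * Real.pi : ℂ))⁻¹ * (∮ k in C(I, r), Complex.exp (I * k * x)) = 0 ∧
      -(I * (2 * Real.pi : ℂ)⁻¹) *
          (∮ k in C(I, r), (k / (1 + k ^ 2)) * Complex.exp (I * k * x)) =
        Complex.exp (-x) / 2 ∧
      Complex.exp (-(x : ℂ)) / 2 ≠ 0) := by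
  refine ⟨entire_circleIntegral_zero, fun x r hr hr2 => ⟨?_, ?_, ?_⟩⟩
  · rw [entire_circleIntegral_zero _ (by fun_prop) I r, mul_zero]
  · -- residue computation
    set F : ℂ → ℂ := fun k => k / (k + I) * Complex.exp (I * k * x) with hF
    have hne : ∀ z ∈ Metric.closedBall I r, z + I ≠ 0 := by
      intro z hz h0
      have hz' : dist z I ≤ r := Metric.mem_closedBall.mp hz
      have hzI : z = -I := by linear_combination h0
      rw [hzI] at hz'
      have hd2 : dist (-I : ℂ) I = 2 := by
        rw [Complex.dist_eq, show (-I - I : ℂ) = (-2) * I by ring]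
        simp
      linarith [hd2 ▸ hz']
    have hFd : DiffContOnCl ℂ F (Metric.ball I r) := by
      apply DifferentiableOn.diffContOnCl
      rw [closure_ball I (ne_of_gt hr)]
      intro z hz
      exact (((differentiableAt_id.div (differentiableAt_id.add_const I)
        (hne z hz)).mul (Complex.differentiable_exp.comp (by fun_prop)
          |>.differentiableAt))).differentiableWithinAt
    have hI : (I : ℂ) ∈ Metric.ball I r := Metric.mem_ball_self hr
    have key : (∮ k in C(I, r), (k - I)⁻¹ • F k) = (2 * Real.pi * I : ℂ) • F I :=
      hFd.circleIntegral_sub_inv_smul hI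
    have congr_eq : (∮ k in C(I, r), (k / (1 + k ^ 2)) * Complex.exp (I * k * x))
        = ∮ k in C(I, r), (k - I)⁻¹ • F k := by
      apply circleIntegral.integral_congr hr.le
      intro z hz
      have hz' : z ∈ Metric.closedBall I r := Metric.sphere_subset_closedBall hz
      have h1 : z - I ≠ 0 := by
        intro h0
        have hzI : z = I := by linear_combination h0
        have hsp := Metric.mem_sphere.mp hz
        rw [hzI, dist_self] at hsp
        exact (ne_of_gt hr) hsp.symm
      have h2 : z + I ≠ 0 := hne z hz'
      have hfac : 1 + z ^ 2 = (z - I) * (z + I) := by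
        have hI2 : (I : ℂ) ^ 2 = -1 := I_sq
        linear_combination hI2
      simp only [hF, smul_eq_mul]
      rw [hfac]
      field_simp
    have h12 : (I : ℂ) / (2 * I) = 1 / 2 := by
      rw [div_eq_div_iff (by simp [I_ne_zero]) two_ne_zero]
      ring
    have hFI : F I = Complex.exp (-(x : ℂ)) / 2 := by
      simp only [hF]
      rw [show I * I * (x : ℂ) = -(x : ℂ) by rw [show (I : ℂ) * I = -1 from I_mul_I]; ring,
        show (I : ℂ) + I = 2 * I by ring, h12]
      ring
    have h2pi : (2 * (Real.pi : ℂ)) ≠ 0 :=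
      mul_ne_zero two_ne_zero (by exact_mod_cast Real.pi_ne_zero)
    rw [congr_eq, key, smul_eq_mul, hFI]
    rw [show -(I * (2 * (Real.pi : ℂ))⁻¹) * (2 * Real.pi * I * (Complex.exp (-(x:ℂ)) / 2))
        = (-(I * I)) * ((2 * (Real.pi : ℂ)) * (2 * (Real.pi : ℂ))⁻¹) *
          (Complex.exp (-(x:ℂ)) / 2) by ring,
      I_mul_I, mul_inv_cancel₀ h2pi]
    ring
  · simp [Complex.exp_ne_zero]
end

section
/- There do not exist entire functions \phi, \Pi : \mathbb{C} \to \mathbb{C}, with \phi not identically zero, such that \Pi(k) = -i\sqrt{m^2+k^2}\,\phi(k) for all k, where m > 0; i.e. if \Pi(k)^2 = -(m^2+k^2)\phi(k)^2 holds for entire \phi, \Pi and \phi(im) \ne 0 or \phi(-im) \ne 0, a contradiction follows. -/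
open Complex Filter Topology

/-- Positive-frequency solutions cannot be localized: there are no entire
`φ, Pi` with `Pi(k)² = -(m²+k²) φ(k)²` and `φ(im) ≠ 0`. -/
theorem no_entire_positive_frequency (m : ℝ) (hm : 0 < m)
    (φ Pi : ℂ → ℂ) (hφ : Differentiable ℂ φ) (hPi : Differentiable ℂ Pi)
    (hrel : ∀ k : ℂ, Pi k ^ 2 = -((m : ℂ) ^ 2 + k ^ 2) * φ k ^ 2)
    (hnz : φ (I * m) ≠ 0) : False := by
  set c : ℂ := I * m with hc
  have hc2 : c ^ 2 = -((m : ℂ) ^ 2) := by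
    simp [hc, mul_pow, I_sq]
  have hfac : ∀ k : ℂ, (m : ℂ) ^ 2 + k ^ 2 = (k - c) * (k + c) := by
    intro k; linear_combination hc2
  have hPic : Pi c = 0 := by
    have := hrel c
    rw [hfac c] at this
    simp at this
    exact this
  -- slope of Pi at c tends to deriv Pi c
  have hd : HasDerivAt Pi (deriv Pi c) c := (hPi c).hasDerivAt
  have hslope : Tendsto (slope Pi c) (𝓝[≠] c) (𝓝 (deriv Pi c)) :=
    hasDerivAt_iff_tendsto_slope.mp hd
  have hPitend : Tendsto Pi (𝓝[≠] c) (𝓝 0) := by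
    have h := (hPi.continuous.tendsto c).mono_left (nhdsWithin_le_nhds (s := {c}ᶜ))
    rwa [hPic] at h
  have hF : Tendsto (fun k => Pi k * slope Pi c k) (𝓝[≠] c)
      (𝓝 (0 * deriv Pi c)) := hPitend.mul hslope
  have hG : Tendsto (fun k => -(k + c) * φ k ^ 2) (𝓝[≠] c)
      (𝓝 (-(c + c) * φ c ^ 2)) := by
    apply Tendsto.mono_left _ nhdsWithin_le_nhds
    exact (Continuous.tendsto (((continuous_id.add continuous_const).neg.mul ((hφ.continuous).pow 2))) c)
  have heq : (fun k => Pi k * slope Pi c k) =ᶠ[𝓝[≠] c]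
      (fun k => -(k + c) * φ k ^ 2) := by
    filter_upwards [self_mem_nhdsWithin] with k hk
    have hk' : k - c ≠ 0 := sub_ne_zero.mpr hk
    have : Pi k * slope Pi c k = Pi k ^ 2 / (k - c) := by
      rw [slope_def_field, hPic]
      field_simp; ring
    rw [this, hrel k, hfac k]
    field_simp
  have huniq : (0 : ℂ) * deriv Pi c = -(c + c) * φ c ^ 2 :=
    tendsto_nhds_unique (hF.congr' heq) hG
  have hcne : c ≠ 0 := by
    simp [hc, I_ne_zero, hm.ne']
  apply hnz
  have : -(c + c) * φ c ^ 2 = 0 := by rw [← huniq]; ring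
  rcases mul_eq_zero.mp this with h | h
  · exfalso; apply hcne
    have : c + c = 0 := by simpa using h
    linear_combination this / 2
  · exact pow_eq_zero_iff (by norm_num) |>.mp h
end
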